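/- arXiv:2202.07695 — 2 statements merged into one kernel-verified Lean document; each statement's English description precedes it below -/
import Mathlib

section
/- Let Δ ∈ ℝ, N ≥ 1, Y = (y_1 < ⋯ < y_N) ∈ ℤ^N, and r > 0 with r² + 2|Δ|r < 1. Define u : ℤ^N × ℝ → ℂ by u(x;t) = Σ_{σ ∈ S_N} (2πi)^{-N} ∮_{C_r}⋯∮_{C_r} A_σ(ξ) ∏_{i=1}^N ξ_{σ(i)}^{x_i} ∏_{i=1}^N ξ_i^{-y_i-1} e^{-itε(ξ_i)} dξ_1⋯dξ_N, now for arbitrary (not necessarily increasing) x ∈ ℤ^N. Then for every x ∈ ℤ^N the map t ↦ u(x;t) is differentiable and satisfies the free Schrödinger equation i·∂u/∂t(x;t) = Σ_{j=1}^N [u(x - e_j; t) + u(x + e_j; t)] - 2NΔ·u(x;t), where e_j denotes the j-th standard basis vector of ℤ^N. -/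
open scoped Real BigOperators

/-- `(2πi)⁻¹ ∮_{|z - c| = ρ} f(z) dz`, positively oriented circle. -/
noncomputable def cInt (c : ℂ) (ρ : ℝ) (f : ℂ → ℂ) : ℂ :=
  (2 * Real.pi * Complex.I)⁻¹ * ∮ z in C(c, ρ), f z

/-- Iterated contour integral: the `i`-th coordinate is integrated using the
functional `J i`. -/
noncomputable def iterInt : (n : ℕ) → (Fin n → ((ℂ → ℂ) → ℂ)) → ((Fin n → ℂ) → ℂ) → ℂ
  | 0, _, f => f Fin.elim0
  | n + 1, J, f => J 0 fun z => iterInt n (fun i => J i.succ) fun w => f (Fin.cons z w)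

/-- Dispersion relation `ε(ξ) = ξ + ξ⁻¹ - 2Δ`. -/
noncomputable def eps (Δ : ℝ) (ξ : ℂ) : ℂ := ξ + ξ⁻¹ - 2 * (Δ : ℂ)

/-- Yang–Yang S-matrix `S(ξ', ξ) = -(1 + ξξ' - 2Δξ')/(1 + ξξ' - 2Δξ)`. -/
noncomputable def Smat (Δ : ℂ) (ξ' ξ : ℂ) : ℂ :=
  -(1 + ξ * ξ' - 2 * Δ * ξ') / (1 + ξ * ξ' - 2 * Δ * ξ)

/-- `A_σ(ξ)`: the product of `S(ξ_β, ξ_α)` over inversions of `σ`, i.e. over all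
pairs `α < β` such that `β` appears before `α` in the list `(σ(1), …, σ(N))`. -/
noncomputable def Acoef {N : ℕ} (Δ : ℂ) (σ : Equiv.Perm (Fin N)) (ξ : Fin N → ℂ) : ℂ :=
  ∏ p ∈ Finset.univ.filter
      (fun p : Fin N × Fin N => p.1 < p.2 ∧ σ.symm p.2 < σ.symm p.1),
    Smat Δ (ξ p.2) (ξ p.1)

/-- The Bethe ansatz wave function `ψ_N(X; t)` with initial condition `Y = y`,
on small contours of radius `r`. -/
noncomputable def psi (Δ : ℝ) (N : ℕ) (r : ℝ) (y : Fin N → ℤ) (x : Fin N → ℤ) (t : ℝ) : ℂ :=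
  ∑ σ : Equiv.Perm (Fin N),
    iterInt N (fun _ => cInt 0 r) fun ξ =>
      Acoef (Δ : ℂ) σ ξ * (∏ i, ξ (σ i) ^ x i) *
        ∏ i, ξ i ^ (-y i - 1) * Complex.exp (-Complex.I * (t : ℂ) * eps Δ (ξ i))


/-!
On the torus `|ξ_i| = r` the ξ_i are nonzero and, because `r² + 2|Δ|r < 1`, so are the
denominators of the S-matrix; the integrands are therefore continuous there and the iterated
contour integrals are `(2πi)^{-N}` times torus integrals. The time dependence of each integrand
is `exp (-i t E(ξ))` with `E(ξ) = ∑ ε(ξ_i)`, so differentiating under the integral multiplies it by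
`-i E(ξ)`. As `E` is symmetric, `E(ξ) = ∑_j ε(ξ_{σ j})`, and multiplying the plane wave
`∏ ξ_{σ i}^{x_i}` by `ξ_{σ j} + ξ_{σ j}⁻¹` shifts `x_j` by `±1`. Integrating this identity gives
the equation for each `σ`, and summing over `σ` gives it for `u`.
-/

open MeasureTheory Set Complex

section TorusIntegral

variable {n : ℕ} {E : Type*} [NormedAddCommGroup E]

def torus (c : Fin n → ℂ) (R : Fin n → ℝ) : Set (Fin n → ℂ) :=
  univ.pi fun i => Metric.sphere (c i) (R i)

theorem torusMap_mem_torus {c : Fin n → ℂ} {R : Fin n → ℝ} (hR : 0 ≤ R) (θ : Fin n → ℝ) :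
    torusMap c R θ ∈ torus c R := fun i _ => by
  simp [torusMap, abs_of_nonneg (hR i)]

theorem norm_apply_of_mem_torus {R : Fin n → ℝ} {ξ : Fin n → ℂ} (hξ : ξ ∈ torus 0 R)
    (i : Fin n) : ‖ξ i‖ = R i := by
  simpa using hξ i trivial

theorem apply_ne_zero_of_mem_torus {r : ℝ} (hr : 0 < r) {ξ : Fin n → ℂ}
    (hξ : ξ ∈ torus 0 fun _ => r) (i : Fin n) : ξ i ≠ 0 :=
  norm_pos_iff.mp ((norm_apply_of_mem_torus hξ i).trans_gt hr)

theorem ContinuousOn.continuous_comp_torusMap {X : Type*} [TopologicalSpace X]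
    {f : (Fin n → ℂ) → X} {c : Fin n → ℂ} {R : Fin n → ℝ} (hR : 0 ≤ R)
    (hf : ContinuousOn f (torus c R)) : Continuous fun θ => f (torusMap c R θ) :=
  hf.comp_continuous (by unfold torusMap; fun_prop) (torusMap_mem_torus hR)

theorem ContinuousOn.torusIntegrable {f : (Fin n → ℂ) → E} {c : Fin n → ℂ} {R : Fin n → ℝ}
    (hR : 0 ≤ R) (hf : ContinuousOn f (torus c R)) : TorusIntegrable f c R :=
  (hf.continuous_comp_torusMap hR).integrableOn_Icc

theorem torusIntegral_congr [NormedSpace ℂ E] {f g : (Fin n → ℂ) → E} {c : Fin n → ℂ}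
    {R : Fin n → ℝ} (hR : 0 ≤ R) (h : EqOn f g (torus c R)) :
    (∯ x in T(c, R), f x) = ∯ x in T(c, R), g x := by
  simp only [torusIntegral, h (torusMap_mem_torus hR _)]

theorem torusIntegral_finset_sum [NormedSpace ℂ E] {ι : Type*} (s : Finset ι)
    {f : ι → (Fin n → ℂ) → E} {c : Fin n → ℂ} {R : Fin n → ℝ}
    (hf : ∀ i ∈ s, TorusIntegrable (f i) c R) :
    (∯ x in T(c, R), ∑ i ∈ s, f i x) = ∑ i ∈ s, ∯ x in T(c, R), f i x := by
  simp only [torusIntegral, Finset.smul_sum]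
  exact integral_finsetSum s fun i hi => (hf i hi).function_integrable

theorem hasDerivAt_torusIntegral [NormedSpace ℂ E] [CompleteSpace E] {c : Fin n → ℂ}
    {R : Fin n → ℝ} {F F' : ℝ → (Fin n → ℂ) → E} {t₀ : ℝ}
    (hF : ∀ t, Continuous fun θ => F t (torusMap c R θ))
    (hF' : Continuous fun p : ℝ × (Fin n → ℝ) => F' p.1 (torusMap c R p.2))
    (hderiv : ∀ t θ, HasDerivAt (fun s => F s (torusMap c R θ)) (F' t (torusMap c R θ)) t) :
    HasDerivAt (fun t => ∯ x in T(c, R), F t x) (∯ x in T(c, R), F' t₀ x) t₀ := by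
  set J : (Fin n → ℝ) → ℂ := fun θ => ∏ i, (R i : ℂ) * exp (θ i * I) * I
  have hJ : Continuous J := by fun_prop
  have hG' : Continuous fun p : ℝ × (Fin n → ℝ) => J p.2 • F' p.1 (torusMap c R p.2) :=
    (hJ.comp continuous_snd).smul hF'
  obtain ⟨M, hM⟩ := ((isCompact_closedBall t₀ 1).prod isCompact_Icc).exists_bound_of_continuousOn
    hG'.continuousOn
  exact (hasDerivAt_integral_of_dominated_loc_of_deriv_le (bound := fun _ => M)
    (F := fun t θ => J θ • F t (torusMap c R θ)) (F' := fun t θ => J θ • F' t (torusMap c R θ))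
    (Metric.ball_mem_nhds t₀ one_pos)
    (.of_forall fun t => (hJ.smul (hF t)).aestronglyMeasurable)
    (hJ.smul (hF t₀)).integrableOn_Icc
    (hG'.comp (Continuous.prodMk_right t₀)).aestronglyMeasurable
    (ae_restrict_of_forall_mem measurableSet_Icc fun θ hθ t ht =>
      hM (t, θ) ⟨Metric.ball_subset_closedBall ht, hθ⟩)
    (integrableOn_const measure_Icc_lt_top.ne)
    (.of_forall fun θ t _ => (hderiv t θ).const_smul (J θ))).2

end TorusIntegral

theorem iterInt_cInt_eq_torusIntegral {r : ℝ} (hr : 0 ≤ r) :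
    ∀ (n : ℕ) (f : (Fin n → ℂ) → ℂ), ContinuousOn f (torus 0 fun _ => r) →
      iterInt n (fun _ => cInt 0 r) f = (2 * π * I)⁻¹ ^ n * ∯ x in T(0, fun _ => r), f x
  | 0, f, _ => by simp [iterInt, Subsingleton.elim Fin.elim0 0]
  | n + 1, f, hf => by
    have hsection : ∀ z ∈ Metric.sphere (0 : ℂ) r,
        ContinuousOn (fun w => f (Fin.cons z w)) (torus 0 fun _ => r) := fun z hz =>
      hf.comp (continuous_const.finCons continuous_id (A := fun _ => ℂ)).continuousOn fun w hw =>
        fun i _ => Fin.cases hz (fun j => hw j trivial) i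
    rw [torusIntegral_succ (hf.torusIntegrable fun _ => hr), iterInt, cInt,
      circleIntegral.integral_congr hr fun z hz =>
        iterInt_cInt_eq_torusIntegral hr n _ (hsection z hz),
      circleIntegral.integral_const_mul, pow_succ']
    exact (mul_assoc _ _ _).symm

section FreeEquation

variable (Δ : ℝ) {N : ℕ}

def SolvesFreeSchrodinger (u : (Fin N → ℤ) → ℝ → ℂ) : Prop :=
  ∀ x t, ∃ d : ℂ, HasDerivAt (u x) d t ∧
    I * d = (∑ j, (u (Function.update x j (x j - 1)) t + u (Function.update x j (x j + 1)) t))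
      - 2 * (N : ℂ) * (Δ : ℂ) * u x t

variable {Δ}

theorem SolvesFreeSchrodinger.const_mul {u : (Fin N → ℤ) → ℝ → ℂ}
    (hu : SolvesFreeSchrodinger Δ u) (c : ℂ) :
    SolvesFreeSchrodinger Δ fun x t => c * u x t := by
  intro x t
  obtain ⟨d, hd, heq⟩ := hu x t
  refine ⟨c * d, hd.const_mul c, ?_⟩
  simp only [← mul_add, ← Finset.mul_sum]
  linear_combination c * heq

theorem SolvesFreeSchrodinger.sum {ι : Type*} (s : Finset ι) {u : ι → (Fin N → ℤ) → ℝ → ℂ}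
    (hu : ∀ i ∈ s, SolvesFreeSchrodinger Δ (u i)) :
    SolvesFreeSchrodinger Δ fun x t => ∑ i ∈ s, u i x t := by
  intro x t
  choose! d hd heq using fun i hi => hu i hi x t
  refine ⟨∑ i ∈ s, d i, HasDerivAt.fun_sum hd, ?_⟩
  rw [Finset.mul_sum, Finset.sum_congr rfl heq, Finset.sum_sub_distrib, ← Finset.mul_sum,
    Finset.sum_comm]
  simp only [Finset.sum_add_distrib]

end FreeEquation

theorem solvesFreeSchrodinger_torusIntegral {Δ : ℝ} {N : ℕ} {c : Fin N → ℂ} {R : Fin N → ℝ}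
    (hR : 0 ≤ R) {a : (Fin N → ℤ) → (Fin N → ℂ) → ℂ} {ω : (Fin N → ℂ) → ℂ}
    (ha : ∀ x, ContinuousOn (a x) (torus c R)) (hω : ContinuousOn ω (torus c R))
    (hdisp : ∀ x, ∀ ξ ∈ torus c R, a x ξ * ω ξ =
      (∑ j, (a (Function.update x j (x j - 1)) ξ + a (Function.update x j (x j + 1)) ξ))
        - 2 * (N : ℂ) * (Δ : ℂ) * a x ξ) :
    SolvesFreeSchrodinger Δ fun x t => ∯ ξ in T(c, R), a x ξ * exp (-I * t * ω ξ) := by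
  intro x t
  have ha' := (ha x).continuous_comp_torusMap hR
  have hω' := hω.continuous_comp_torusMap hR
  refine ⟨_, hasDerivAt_torusIntegral (F := fun s ξ => a x ξ * exp (-I * s * ω ξ))
    (F' := fun s ξ => a x ξ * (-I * ω ξ) * exp (-I * s * ω ξ))
    (fun s => ha'.mul (continuous_const.mul hω').cexp)
    (((ha'.comp continuous_snd).mul (continuous_const.mul (hω'.comp continuous_snd))).mul
      ((continuous_const.mul (continuous_ofReal.comp continuous_fst)).mul
        (hω'.comp continuous_snd)).cexp) fun s θ => ?_, ?_⟩
  · exact ((((hasDerivAt_id s).ofReal_comp.const_mul (-I)).mul_const _).cexp.const_mul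
      _).congr_deriv (by simp only [id, ofReal_one]; ring)
  have hwave : ∀ b, ContinuousOn (fun ξ => a b ξ * exp (-I * t * ω ξ)) (torus c R) := fun b =>
    (ha b).mul (continuousOn_const.mul hω).cexp
  have hint b := (hwave b).torusIntegrable hR
  rw [← torusIntegral_const_mul, torusIntegral_congr hR fun ξ hξ => show _ =
      (∑ j, (a (Function.update x j (x j - 1)) ξ * exp (-I * t * ω ξ) +
        a (Function.update x j (x j + 1)) ξ * exp (-I * t * ω ξ)))
      - 2 * (N : ℂ) * (Δ : ℂ) * (a x ξ * exp (-I * t * ω ξ)) by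
    simp only [← add_mul, ← Finset.sum_mul]
    linear_combination
      exp (-I * t * ω ξ) * hdisp x ξ hξ - a x ξ * ω ξ * exp (-I * t * ω ξ) * I_sq,
    torusIntegral_sub, torusIntegral_const_mul, torusIntegral_finset_sum]
  · simp only [torusIntegral_add (hint _) (hint _)]
  · exact fun j _ => (hint _).add (hint _)
  · exact (continuousOn_finsetSum _ fun j _ => (hwave _).add (hwave _)).torusIntegrable hR
  · exact (continuousOn_const.mul (hwave x)).torusIntegrable hR

theorem prod_zpow_update_add {ι G : Type*} [Fintype ι] [DecidableEq ι] [CommGroupWithZero G]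
    {z : ι → G} {j : ι} (hz : z j ≠ 0) (x : ι → ℤ) (k : ℤ) :
    ∏ i, z i ^ Function.update x j (x j + k) i = z j ^ k * ∏ i, z i ^ x i := by
  rw [← Finset.mul_prod_erase _ _ (Finset.mem_univ j),
    ← Finset.mul_prod_erase _ (fun i => z i ^ x i) (Finset.mem_univ j), Function.update_self,
    zpow_add₀ hz, mul_comm (z j ^ x j), mul_assoc,
    Finset.prod_congr rfl fun i hi => by rw [Function.update_of_ne (Finset.ne_of_mem_erase hi)]]

theorem one_add_mul_sub_ne_zero {Δ r : ℝ} (hr1 : r ^ 2 + 2 * |Δ| * r < 1) {a b : ℂ}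
    (ha : ‖a‖ ≤ r) (hb : ‖b‖ ≤ r) : 1 + a * b - 2 * (Δ : ℂ) * a ≠ 0 := by
  intro h
  have h1 : (1 : ℂ) = 2 * (Δ : ℂ) * a - a * b := by linear_combination h
  have : (1 : ℝ) ≤ r ^ 2 + 2 * |Δ| * r :=
    calc (1 : ℝ) = ‖2 * (Δ : ℂ) * a - a * b‖ := by rw [← h1, norm_one]
      _ ≤ ‖2 * (Δ : ℂ) * a‖ + ‖a * b‖ := norm_sub_le _ _
      _ = 2 * |Δ| * ‖a‖ + ‖a‖ * ‖b‖ := by simp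
      _ ≤ r ^ 2 + 2 * |Δ| * r := by nlinarith [norm_nonneg a, norm_nonneg b, abs_nonneg Δ]
  linarith

section BetheAnsatz

variable (Δ : ℝ) {N : ℕ}

noncomputable def amplitude (σ : Equiv.Perm (Fin N)) (y x : Fin N → ℤ) (ξ : Fin N → ℂ) : ℂ :=
  Acoef (Δ : ℂ) σ ξ * (∏ i, ξ (σ i) ^ x i) * ∏ i, ξ i ^ (-y i - 1)

noncomputable def energy (ξ : Fin N → ℂ) : ℂ := ∑ i, eps Δ (ξ i)

variable {Δ}

theorem amplitude_mul_energy (σ : Equiv.Perm (Fin N)) (y x : Fin N → ℤ) {ξ : Fin N → ℂ}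
    (hξ : ∀ i, ξ i ≠ 0) :
    amplitude Δ σ y x ξ * energy Δ ξ =
      (∑ j, (amplitude Δ σ y (Function.update x j (x j - 1)) ξ +
        amplitude Δ σ y (Function.update x j (x j + 1)) ξ))
        - 2 * (N : ℂ) * (Δ : ℂ) * amplitude Δ σ y x ξ := by
  have hshift : ∀ j k, amplitude Δ σ y (Function.update x j (x j + k)) ξ =
      ξ (σ j) ^ k * amplitude Δ σ y x ξ := fun j k => by
    simp only [amplitude, prod_zpow_update_add (z := fun i => ξ (σ i)) (hξ _)]
    ring
  calc amplitude Δ σ y x ξ * energy Δ ξ = ∑ j, amplitude Δ σ y x ξ * eps Δ (ξ (σ j)) := by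
        rw [energy, ← Equiv.sum_comp σ, Finset.mul_sum]
    _ = ∑ j, ((amplitude Δ σ y (Function.update x j (x j - 1)) ξ +
          amplitude Δ σ y (Function.update x j (x j + 1)) ξ) -
          2 * (Δ : ℂ) * amplitude Δ σ y x ξ) := Finset.sum_congr rfl fun j _ => by
        rw [show x j - 1 = x j + -1 from sub_eq_add_neg _ _, hshift, hshift, zpow_neg_one,
          zpow_one, eps]
        ring
    _ = _ := by
        rw [Finset.sum_sub_distrib, Finset.sum_const, Finset.card_univ, Fintype.card_fin,
          nsmul_eq_mul]
        ring

variable {r : ℝ}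

theorem continuousOn_amplitude (hr : 0 < r) (hr1 : r ^ 2 + 2 * |Δ| * r < 1)
    (σ : Equiv.Perm (Fin N)) (y x : Fin N → ℤ) :
    ContinuousOn (amplitude Δ σ y x) (torus 0 fun _ => r) := by
  have hnorm (ξ : Fin N → ℂ) (hξ : ξ ∈ torus 0 fun _ => r) (i : Fin N) :=
    (norm_apply_of_mem_torus hξ i).le
  have hzpow (k : Fin N → ℤ) (e : Fin N → Fin N) :
      ContinuousOn (fun ξ : Fin N → ℂ => ∏ i, ξ (e i) ^ k i) (torus 0 fun _ => r) :=
    continuousOn_finsetProd _ fun i _ => (continuousOn_apply _ _).zpow₀ _ fun _ hξ =>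
      .inl (apply_ne_zero_of_mem_torus hr hξ _)
  refine ((continuousOn_finsetProd _ fun p _ => ContinuousOn.div (by fun_prop) (by fun_prop)
    fun ξ hξ => one_add_mul_sub_ne_zero hr1 (hnorm ξ hξ _) (hnorm ξ hξ _)).mul
    (hzpow x σ)).mul (hzpow _ id)

theorem continuousOn_energy (hr : 0 < r) :
    ContinuousOn (energy Δ (N := N)) (torus 0 fun _ => r) :=
  continuousOn_finsetSum _ fun i _ => ((continuousOn_apply i _).add ((continuousOn_apply i _).inv₀
    fun _ hξ => apply_ne_zero_of_mem_torus hr hξ i)).sub continuousOn_const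

theorem psi_eq_sum_torusIntegral (hr : 0 < r) (hr1 : r ^ 2 + 2 * |Δ| * r < 1) (y : Fin N → ℤ) :
    psi Δ N r y = fun x (t : ℝ) => ∑ σ, (2 * π * I)⁻¹ ^ N *
      ∯ ξ in T(0, fun _ => r), amplitude Δ σ y x ξ * exp (-I * t * energy Δ ξ) := by
  funext x t
  refine Finset.sum_congr rfl fun σ _ => ?_
  have hcont : ContinuousOn (fun ξ => amplitude Δ σ y x ξ * exp (-I * t * energy Δ ξ))
      (torus 0 fun _ => r) :=
    (continuousOn_amplitude hr hr1 σ y x).mul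
      (continuousOn_const.mul (continuousOn_energy hr)).cexp
  rw [← iterInt_cInt_eq_torusIntegral hr.le N _ hcont]
  congr 1
  funext ξ
  rw [Finset.prod_mul_distrib, ← Complex.exp_sum, energy, Finset.mul_sum, amplitude]
  ring

end BetheAnsatz

theorem stmt1_general (Δ : ℝ) (N : ℕ) (y : Fin N → ℤ)
    (r : ℝ) (hr : 0 < r) (hr1 : r ^ 2 + 2 * |Δ| * r < 1) :
    ∀ (x : Fin N → ℤ) (t : ℝ), ∃ d : ℂ,
      HasDerivAt (fun s : ℝ => psi Δ N r y x s) d t ∧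
      Complex.I * d =
        (∑ j : Fin N,
          (psi Δ N r y (Function.update x j (x j - 1)) t +
            psi Δ N r y (Function.update x j (x j + 1)) t))
          - 2 * (N : ℂ) * (Δ : ℂ) * psi Δ N r y x t := by
  have hsol : SolvesFreeSchrodinger Δ (psi Δ N r y) := by
    rw [psi_eq_sum_torusIntegral hr hr1]
    exact .sum _ fun σ _ => (solvesFreeSchrodinger_torusIntegral (fun _ => hr.le)
      (continuousOn_amplitude hr hr1 σ y) (continuousOn_energy hr) fun x ξ hξ =>
        amplitude_mul_energy σ y x (apply_ne_zero_of_mem_torus hr hξ)).const_mul _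
  exact hsol

theorem stmt1 (Δ : ℝ) (N : ℕ) (hN : 0 < N) (y : Fin N → ℤ) (hy : StrictMono y)
    (r : ℝ) (hr : 0 < r) (hr1 : r ^ 2 + 2 * |Δ| * r < 1) :
    ∀ (x : Fin N → ℤ) (t : ℝ), ∃ d : ℂ,
      HasDerivAt (fun s : ℝ => psi Δ N r y x s) d t ∧
      Complex.I * d =
        (∑ j : Fin N,
          (psi Δ N r y (Function.update x j (x j - 1)) t +
            psi Δ N r y (Function.update x j (x j + 1)) t))
          - 2 * (N : ℂ) * (Δ : ℂ) * psi Δ N r y x t :=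
  stmt1_general Δ N y r hr hr1
end

section
/- Let Δ ∈ ℝ, N ≥ 2, Y = (y_1 < ⋯ < y_N) ∈ ℤ^N, r > 0 with r² + 2|Δ|r < 1, and let u : ℤ^N × ℝ → ℂ be defined by u(x;t) = Σ_{σ ∈ S_N} (2πi)^{-N} ∮_{C_r}⋯∮_{C_r} A_σ(ξ) ∏_{i=1}^N ξ_{σ(i)}^{x_i} ∏_{i=1}^N ξ_i^{-y_i-1} e^{-itε(ξ_i)} dξ_1⋯dξ_N for arbitrary x ∈ ℤ^N. Then u satisfies the two-body boundary conditions: for every t ∈ ℝ, every j ∈ {1, …, N-1}, every a ∈ ℤ and every choice of the remaining coordinates, u(…, a, a, …; t) + u(…, a+1, a+1, …; t) = 2Δ·u(…, a, a+1, …; t), where the displayed entries are the j-th and (j+1)-th coordinates and the other coordinates are the same in all three terms. -/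
/-
Each `psi` is a single iterated contour integral of `(∑_σ A_σ(ξ) ∏ ξ_{σ(i)}^{x_i}) · w(ξ)` with a
weight `w` independent of `x`, so the boundary condition reduces to an identity between the
integrands on the torus `|ξ_i| = r`. There the terms cancel in pairs `σ`, `σ ∘ (j j+1)`: the
adjacent swap adds exactly one inversion, hence the factor `S(ξ_{σ(j+1)}, ξ_{σ(j)})`, and this
factor is minus the ratio of the two boundary combinations. The bound `r² + 2|Δ|r < 1` keeps the
denominators of `S` away from zero on the contours; this also makes the integrands continuous,
which is what linearity of the iterated integral needs.
-/

open scoped Real BigOperators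

open Finset

section IteratedCircleIntegral

variable {c : ℂ} {r : ℝ} {n : ℕ}

lemma cInt_congr {f g : ℂ → ℂ} (h : ∀ θ, f (circleMap c r θ) = g (circleMap c r θ)) :
    cInt c r f = cInt c r g := by
  unfold cInt circleIntegral
  congr 1
  exact intervalIntegral.integral_congr fun θ _ => by simp only [h]

lemma cInt_add {f g : ℂ → ℂ} (hf : Continuous (f ∘ circleMap c r))
    (hg : Continuous (g ∘ circleMap c r)) :
    cInt c r (fun z => f z + g z) = cInt c r f + cInt c r g := by
  rw [cInt, circleIntegral.integral_add (hf.intervalIntegrable _ _) (hg.intervalIntegrable _ _),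
    mul_add, cInt, cInt]

lemma cInt_const_mul (a : ℂ) (f : ℂ → ℂ) : cInt c r (fun z => a * f z) = a * cInt c r f := by
  rw [cInt, circleIntegral.integral_const_mul, cInt, mul_left_comm]

lemma continuous_cInt {X : Type*} [TopologicalSpace X] {f : X → ℂ → ℂ}
    (hf : Continuous fun p : X × ℝ => f p.1 (circleMap c r p.2)) :
    Continuous fun x => cInt c r (f x) := by
  refine continuous_const.mul
    (intervalIntegral.continuous_parametric_intervalIntegral_of_continuous' ?_ _ _)
  simp only [deriv_circleMap]
  exact ((continuous_circleMap 0 r).comp continuous_snd |>.mul continuous_const).smul hf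

lemma iterInt_congr {f g : (Fin n → ℂ) → ℂ}
    (h : ∀ θ : Fin n → ℝ, f (circleMap c r ∘ θ) = g (circleMap c r ∘ θ)) :
    iterInt n (fun _ => cInt c r) f = iterInt n (fun _ => cInt c r) g := by
  induction n with
  | zero => simpa only [iterInt, Subsingleton.elim (circleMap c r ∘ Fin.elim0) Fin.elim0]
      using h Fin.elim0
  | succ n ih =>
    exact cInt_congr fun θ₀ => ih fun θ => by simpa only [Fin.comp_cons] using h (Fin.cons θ₀ θ)

lemma continuous_iterInt {X : Type*} [TopologicalSpace X] {f : X → (Fin n → ℂ) → ℂ}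
    (hf : Continuous fun p : X × (Fin n → ℝ) => f p.1 (circleMap c r ∘ p.2)) :
    Continuous fun x => iterInt n (fun _ => cInt c r) (f x) := by
  induction n generalizing X with
  | zero =>
    exact (hf.comp (continuous_id.prodMk (continuous_const (y := Fin.elim0)))).congr fun x =>
      congrArg (f x) (Subsingleton.elim _ _)
  | succ n ih =>
    refine continuous_cInt <| ih (X := X × ℝ) <|
      (hf.comp ((continuous_fst.comp continuous_fst).prodMk
        ((continuous_snd.comp continuous_fst).finCons continuous_snd))).congr fun q => ?_
    simp only [Function.comp_apply, Fin.comp_cons]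

lemma iterInt_const_mul (a : ℂ) (f : (Fin n → ℂ) → ℂ) :
    iterInt n (fun _ => cInt c r) (fun ξ => a * f ξ) = a * iterInt n (fun _ => cInt c r) f := by
  induction n with
  | zero => rfl
  | succ n ih => simp only [iterInt, ih, cInt_const_mul]

lemma iterInt_add {f g : (Fin n → ℂ) → ℂ}
    (hf : Continuous fun θ : Fin n → ℝ => f (circleMap c r ∘ θ))
    (hg : Continuous fun θ : Fin n → ℝ => g (circleMap c r ∘ θ)) :
    iterInt n (fun _ => cInt c r) (fun ξ => f ξ + g ξ)
      = iterInt n (fun _ => cInt c r) f + iterInt n (fun _ => cInt c r) g := by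
  induction n with
  | zero => rfl
  | succ n ih =>
    have slice {h : (Fin (n + 1) → ℂ) → ℂ}
        (hh : Continuous fun θ : Fin (n + 1) → ℝ => h (circleMap c r ∘ θ)) :
        Continuous fun p : ℝ × (Fin n → ℝ) =>
          h (Fin.cons (circleMap c r p.1) (circleMap c r ∘ p.2)) :=
      (hh.comp (continuous_fst.finCons continuous_snd)).congr fun p => by
        simp only [Function.comp_apply, Fin.comp_cons]
    simp only [iterInt]
    rw [← cInt_add (continuous_iterInt (slice hf)) (continuous_iterInt (slice hg))]
    exact cInt_congr fun θ₀ => ih ((slice hf).comp (Continuous.prodMk_right θ₀))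
      ((slice hg).comp (Continuous.prodMk_right θ₀))

lemma iterInt_sum {ι : Type*} (s : Finset ι) (f : ι → (Fin n → ℂ) → ℂ)
    (hf : ∀ i ∈ s, Continuous fun θ : Fin n → ℝ => f i (circleMap c r ∘ θ)) :
    iterInt n (fun _ => cInt c r) (fun ξ => ∑ i ∈ s, f i ξ)
      = ∑ i ∈ s, iterInt n (fun _ => cInt c r) (f i) := by
  classical
  induction s using Finset.induction_on with
  | empty => simpa using iterInt_const_mul (c := c) (r := r) 0 fun _ => 0
  | insert i s hi ih =>
    simp only [sum_insert hi]
    rw [iterInt_add (hf i (mem_insert_self i s))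
      (continuous_finsetSum s fun k hk => hf k (mem_insert_of_mem hk)),
      ih fun k hk => hf k (mem_insert_of_mem hk)]

end IteratedCircleIntegral

section Inversions

variable {N : ℕ}

def inversions (σ : Equiv.Perm (Fin N)) : Finset (Fin N × Fin N) :=
  univ.filter fun p => p.1 < p.2 ∧ σ.symm p.2 < σ.symm p.1

lemma Acoef_eq_prod_inversions (Δ : ℂ) (σ : Equiv.Perm (Fin N)) (ξ : Fin N → ℂ) :
    Acoef Δ σ ξ = ∏ p ∈ inversions σ, Smat Δ (ξ p.2) (ξ p.1) := rfl

lemma swap_lt_swap_iff {i k : Fin N} (hik : (i : ℕ) + 1 = k) (u v : Fin N) :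
    Equiv.swap i k u < Equiv.swap i k v ↔ (u = k ∧ v = i) ∨ (u < v ∧ ¬(u = i ∧ v = k)) := by
  rw [Equiv.swap_apply_def, Equiv.swap_apply_def]
  simp only [Fin.lt_def, Fin.ext_iff]
  split_ifs <;> omega

lemma mk_notMem_inversions {σ : Equiv.Perm (Fin N)} {i k : Fin N} (hik : i ≤ k) :
    (σ i, σ k) ∉ inversions σ := by
  simp [inversions, hik]

lemma inversions_mul_swap {σ : Equiv.Perm (Fin N)} {i k : Fin N} (hik : (i : ℕ) + 1 = k)
    (hσ : σ i < σ k) :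
    inversions (σ * Equiv.swap i k) = insert (σ i, σ k) (inversions σ) := by
  ext ⟨p, q⟩
  have hsymm (m : Fin N) : (σ * Equiv.swap i k).symm m = Equiv.swap i k (σ.symm m) := by
    simp [Equiv.Perm.mul_def, Equiv.trans_apply]
  simp only [inversions, mem_filter, mem_univ, true_and, mem_insert, Prod.mk.injEq, hsymm,
    swap_lt_swap_iff hik]
  obtain ⟨a, rfl⟩ := σ.surjective p
  obtain ⟨b, rfl⟩ := σ.surjective q
  simp only [Equiv.symm_apply_apply, σ.injective.eq_iff]
  constructor
  · rintro ⟨hlt, ⟨rfl, rfl⟩ | ⟨hba, -⟩⟩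
    · exact Or.inl ⟨rfl, rfl⟩
    · exact Or.inr ⟨hlt, hba⟩
  · rintro (⟨rfl, rfl⟩ | ⟨hlt, hba⟩)
    · exact ⟨hσ, Or.inl ⟨rfl, rfl⟩⟩
    · refine ⟨hlt, Or.inr ⟨hba, ?_⟩⟩
      rintro ⟨rfl, rfl⟩
      exact hlt.asymm hσ

lemma Acoef_mul_swap (Δ : ℂ) {σ : Equiv.Perm (Fin N)} {i k : Fin N} (hik : (i : ℕ) + 1 = k)
    (hσ : σ i < σ k) (ξ : Fin N → ℂ) :
    Acoef Δ (σ * Equiv.swap i k) ξ = Smat Δ (ξ (σ k)) (ξ (σ i)) * Acoef Δ σ ξ := by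
  rw [Acoef_eq_prod_inversions, inversions_mul_swap hik hσ,
    prod_insert (mk_notMem_inversions (Fin.le_def.2 (by omega))), Acoef_eq_prod_inversions]

end Inversions

lemma prod_zpow_update_update {ι M : Type*} [Fintype ι] [DecidableEq ι] [DivisionCommMonoid M]
    {i k : ι} (hik : i ≠ k) (f : ι → M) (x : ι → ℤ) (b c : ℤ) :
    ∏ m, f m ^ Function.update (Function.update x i b) k c m
      = f i ^ b * f k ^ c * ∏ m ∈ {i, k}ᶜ, f m ^ x m := by
  rw [← prod_mul_prod_compl {i, k}, prod_pair hik, Function.update_of_ne hik,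
    Function.update_self, Function.update_self]
  congr 1
  refine prod_congr rfl fun m hm => ?_
  simp only [mem_compl, mem_insert, mem_singleton, not_or] at hm
  rw [Function.update_of_ne hm.2, Function.update_of_ne hm.1]

/- The two boundary combinations factor as `(ζη)^a (1 + ζη - 2Δη)` and `(ζη)^a (1 + ζη - 2Δζ)`,
and `S(η, ζ)` is minus their ratio. -/
lemma boundary_add_Smat_mul_boundary (Δ : ℂ) (a : ℤ) {ζ η : ℂ} (hζ : ζ ≠ 0) (hη : η ≠ 0)
    (hD : 1 + ζ * η - 2 * Δ * ζ ≠ 0) :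
    (ζ ^ a * η ^ a + ζ ^ (a + 1) * η ^ (a + 1) - 2 * Δ * (ζ ^ a * η ^ (a + 1)))
      + Smat Δ η ζ *
        (η ^ a * ζ ^ a + η ^ (a + 1) * ζ ^ (a + 1) - 2 * Δ * (η ^ a * ζ ^ (a + 1))) = 0 := by
  rw [Smat, zpow_add_one₀ hζ, zpow_add_one₀ hη]
  linear_combination (-(ζ ^ a * η ^ a) * (1 + ζ * η - 2 * Δ * η)) * mul_inv_cancel₀ hD

section TwoBody

variable {N : ℕ}

def twoBodyDefect (Δ : ℂ) (u : (Fin N → ℤ) → ℂ) (i k : Fin N) (x : Fin N → ℤ) (a : ℤ) : ℂ :=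
  u (Function.update (Function.update x i a) k a)
    + u (Function.update (Function.update x i (a + 1)) k (a + 1))
    - 2 * Δ * u (Function.update (Function.update x i a) k (a + 1))

lemma twoBodyDefect_sum {ι : Type*} (Δ : ℂ) (s : Finset ι) (c : ι → ℂ)
    (u : ι → (Fin N → ℤ) → ℂ) (i k : Fin N) (x : Fin N → ℤ) (a : ℤ) :
    twoBodyDefect Δ (fun v => ∑ j ∈ s, c j * u j v) i k x a
      = ∑ j ∈ s, c j * twoBodyDefect Δ (u j) i k x a := by
  simp only [twoBodyDefect, mul_sum, ← sum_add_distrib, ← sum_sub_distrib]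
  exact sum_congr rfl fun j _ => by ring

lemma twoBodyDefect_prod_zpow (Δ : ℂ) {i k : Fin N} (hik : i ≠ k) (f : Fin N → ℂ)
    (x : Fin N → ℤ) (a : ℤ) :
    twoBodyDefect Δ (fun v => ∏ m, f m ^ v m) i k x a
      = (f i ^ a * f k ^ a + f i ^ (a + 1) * f k ^ (a + 1) - 2 * Δ * (f i ^ a * f k ^ (a + 1)))
        * ∏ m ∈ {i, k}ᶜ, f m ^ x m := by
  simp only [twoBodyDefect, prod_zpow_update_update hik]
  ring

noncomputable def betheWave (Δ : ℂ) (ξ : Fin N → ℂ) (x : Fin N → ℤ) : ℂ :=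
  ∑ σ : Equiv.Perm (Fin N), Acoef Δ σ ξ * ∏ m, ξ (σ m) ^ x m

lemma Acoef_mul_twoBodyDefect_add_swap (Δ : ℂ) {ξ : Fin N → ℂ} (hξ : ∀ m, ξ m ≠ 0)
    (hD : ∀ m n, m ≠ n → 1 + ξ m * ξ n - 2 * Δ * ξ m ≠ 0) {i k : Fin N}
    (hik : (i : ℕ) + 1 = k) {σ : Equiv.Perm (Fin N)} (hσ : σ i < σ k) (x : Fin N → ℤ) (a : ℤ) :
    Acoef Δ σ ξ * twoBodyDefect Δ (fun v => ∏ m, ξ (σ m) ^ v m) i k x a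
      + Acoef Δ (σ * Equiv.swap i k) ξ
        * twoBodyDefect Δ (fun v => ∏ m, ξ ((σ * Equiv.swap i k) m) ^ v m) i k x a = 0 := by
  have hne : i ≠ k := fun h => by simp [h] at hik
  have hrest : ∏ m ∈ {i, k}ᶜ, ξ ((σ * Equiv.swap i k) m) ^ x m = ∏ m ∈ {i, k}ᶜ, ξ (σ m) ^ x m :=
    prod_congr rfl fun m hm => by
      simp only [mem_compl, mem_insert, mem_singleton, not_or] at hm
      rw [Equiv.Perm.mul_apply, Equiv.swap_apply_of_ne_of_ne hm.1 hm.2]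
  rw [twoBodyDefect_prod_zpow Δ hne, twoBodyDefect_prod_zpow Δ hne, hrest,
    Acoef_mul_swap Δ hik hσ]
  simp only [Equiv.Perm.mul_apply, Equiv.swap_apply_left, Equiv.swap_apply_right]
  linear_combination (Acoef Δ σ ξ * ∏ m ∈ {i, k}ᶜ, ξ (σ m) ^ x m)
    * boundary_add_Smat_mul_boundary Δ a (hξ (σ i)) (hξ (σ k)) (hD _ _ (σ.injective.ne hne))

theorem twoBodyDefect_betheWave (Δ : ℂ) {ξ : Fin N → ℂ} (hξ : ∀ m, ξ m ≠ 0)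
    (hD : ∀ m n, m ≠ n → 1 + ξ m * ξ n - 2 * Δ * ξ m ≠ 0) {i k : Fin N}
    (hik : (i : ℕ) + 1 = k) (x : Fin N → ℤ) (a : ℤ) :
    twoBodyDefect Δ (betheWave Δ ξ) i k x a = 0 := by
  have hne : i ≠ k := fun h => by simp [h] at hik
  have pair (σ : Equiv.Perm (Fin N)) (hσ : σ i < σ k) :=
    Acoef_mul_twoBodyDefect_add_swap Δ hξ hD hik hσ x a
  have swap_swap (σ : Equiv.Perm (Fin N)) : σ * Equiv.swap i k * Equiv.swap i k = σ := by
    rw [mul_assoc, Equiv.swap_mul_self, mul_one]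
  refine (twoBodyDefect_sum Δ univ _ _ i k x a).trans <|
    sum_ninvolution (· * Equiv.swap i k) (fun σ => ?_) (fun σ _ h => ?_) (fun _ => mem_univ _)
      swap_swap
  · rcases (σ.injective.ne hne).lt_or_gt with hlt | hgt
    · exact pair σ hlt
    · have := pair (σ * Equiv.swap i k) (by simpa using hgt)
      rw [swap_swap] at this
      exact (add_comm _ _).trans this
  · have := congrArg (· i) h
    simp only [Equiv.Perm.mul_apply, Equiv.swap_apply_left, σ.injective.eq_iff] at this
    exact hne this.symm

end TwoBody

lemma one_add_mul_sub_ne_zero_s2 {Δ r : ℝ} (hr1 : r ^ 2 + 2 * |Δ| * r < 1) {z w : ℂ}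
    (hz : ‖z‖ ≤ r) (hw : ‖w‖ ≤ r) : 1 + z * w - 2 * (Δ : ℂ) * z ≠ 0 := by
  intro h
  have hr : 0 ≤ r := (norm_nonneg z).trans hz
  have : ‖z * w - 2 * (Δ : ℂ) * z‖ ≤ r ^ 2 + 2 * |Δ| * r :=
    calc ‖z * w - 2 * (Δ : ℂ) * z‖ ≤ ‖z‖ * ‖w‖ + 2 * |Δ| * ‖z‖ := by
          simpa [norm_mul] using norm_sub_le (z * w) (2 * (Δ : ℂ) * z)
      _ ≤ r ^ 2 + 2 * |Δ| * r := by
          nlinarith [mul_le_mul hz hw (norm_nonneg w) hr, abs_nonneg Δ]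
  rw [show z * w - 2 * (Δ : ℂ) * z = -1 by linear_combination h, norm_neg, norm_one] at this
  linarith

section Psi

variable {N : ℕ}

noncomputable def psiWeight (Δ : ℝ) (y : Fin N → ℤ) (t : ℝ) (ξ : Fin N → ℂ) : ℂ :=
  ∏ i, ξ i ^ (-y i - 1) * Complex.exp (-Complex.I * (t : ℂ) * eps Δ (ξ i))

noncomputable def psiIntegrand (Δ : ℝ) (y : Fin N → ℤ) (t : ℝ) (σ : Equiv.Perm (Fin N))
    (x : Fin N → ℤ) (ξ : Fin N → ℂ) : ℂ :=
  Acoef (Δ : ℂ) σ ξ * (∏ i, ξ (σ i) ^ x i) * psiWeight Δ y t ξ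

lemma sum_psiIntegrand (Δ : ℝ) (y : Fin N → ℤ) (t : ℝ) (x : Fin N → ℤ) (ξ : Fin N → ℂ) :
    ∑ σ, psiIntegrand Δ y t σ x ξ = betheWave Δ ξ x * psiWeight Δ y t ξ :=
  sum_mul .. |>.symm

lemma continuous_psiIntegrand {Δ r : ℝ} (hr : 0 < r) (hr1 : r ^ 2 + 2 * |Δ| * r < 1)
    (y : Fin N → ℤ) (t : ℝ) (σ : Equiv.Perm (Fin N)) (x : Fin N → ℤ) :
    Continuous fun θ : Fin N → ℝ => psiIntegrand Δ y t σ x (circleMap 0 r ∘ θ) := by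
  have hc (i : Fin N) : Continuous fun θ : Fin N → ℝ => circleMap 0 r (θ i) :=
    (continuous_circleMap 0 r).comp (continuous_apply i)
  have hne (θ : Fin N → ℝ) (i : Fin N) : circleMap 0 r (θ i) ≠ 0 := circleMap_ne_center hr.ne'
  have hnorm (θ : Fin N → ℝ) (i : Fin N) : ‖circleMap 0 r (θ i)‖ ≤ r := by
    rw [norm_circleMap_zero, abs_of_pos hr]
  refine .mul (.mul ?_ ?_) ?_
  · refine continuous_finsetProd _ fun p _ => .div ?_ ?_ fun θ => ?_
    · exact ((continuous_const.add ((hc p.1).mul (hc p.2))).sub (continuous_const.mul (hc p.2))).neg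
    · exact (continuous_const.add ((hc p.1).mul (hc p.2))).sub (continuous_const.mul (hc p.1))
    · exact one_add_mul_sub_ne_zero_s2 hr1 (hnorm θ p.1) (hnorm θ p.2)
  · exact continuous_finsetProd _ fun i _ => (hc (σ i)).zpow₀ _ fun θ => .inl (hne θ (σ i))
  · refine continuous_finsetProd _ fun i _ => .mul ?_ (Complex.continuous_exp.comp ?_)
    · exact (hc i).zpow₀ _ fun θ => .inl (hne θ i)
    · exact continuous_const.mul (((hc i).add ((hc i).inv₀ (hne · i))).sub continuous_const)

end Psi

theorem stmt2 (Δ : ℝ) (N : ℕ) (y : Fin N → ℤ)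
    (r : ℝ) (hr : 0 < r) (hr1 : r ^ 2 + 2 * |Δ| * r < 1)
    (t : ℝ) (x : Fin N → ℤ) (j : ℕ) (hj : j + 1 < N) (a : ℤ) :
    psi Δ N r y
        (Function.update (Function.update x ⟨j, by omega⟩ a) ⟨j + 1, hj⟩ a) t
      + psi Δ N r y
        (Function.update (Function.update x ⟨j, by omega⟩ (a + 1)) ⟨j + 1, hj⟩ (a + 1)) t
      = 2 * (Δ : ℂ) * psi Δ N r y
        (Function.update (Function.update x ⟨j, by omega⟩ a) ⟨j + 1, hj⟩ (a + 1)) t := by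
  have hcont (v : Fin N → ℤ) :
      Continuous fun θ : Fin N → ℝ => ∑ σ, psiIntegrand Δ y t σ v (circleMap 0 r ∘ θ) :=
    continuous_finsetSum _ fun σ _ => continuous_psiIntegrand hr hr1 y t σ v
  have hpsi (v : Fin N → ℤ) :
      psi Δ N r y v t = iterInt N (fun _ => cInt 0 r) fun ξ => ∑ σ, psiIntegrand Δ y t σ v ξ :=
    (iterInt_sum univ _ fun σ _ => continuous_psiIntegrand hr hr1 y t σ v).symm
  rw [hpsi, hpsi, hpsi, ← iterInt_add (hcont _) (hcont _), ← iterInt_const_mul]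
  refine iterInt_congr fun θ => ?_
  have hbethe := twoBodyDefect_betheWave (Δ : ℂ) (ξ := circleMap 0 r ∘ θ)
    (fun _ => circleMap_ne_center hr.ne')
    (fun m n _ => one_add_mul_sub_ne_zero_s2 hr1 (by simp [abs_of_pos hr]) (by simp [abs_of_pos hr]))
    (i := ⟨j, by omega⟩) (k := ⟨j + 1, hj⟩) rfl x a
  rw [twoBodyDefect, sub_eq_zero] at hbethe
  simp only [sum_psiIntegrand]
  rw [← add_mul, hbethe, mul_assoc]
end
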